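/- Let f : ℝⁿ → ℝ be differentiable, x ∈ Ω with S := supp(x) satisfying ∅ ≠ S ≠ {1,…,n}, let T := supp(Bx) and T^c := {1,…,p}∖T, and let G ∈ ℝ^{n×n} be symmetric. Define Π := {y ∈ Ω : B_{T^c·}y = 0, y_{S^c} = 0} and Θ(y) := f(x) + ⟨∇f(x), y − x⟩ + (1/2)⟨y − x, G(y − x)⟩ + δ_Π(y) for y ∈ ℝⁿ; and in dimension m := |S|, define Π̂ := {v ∈ ℝ^m : B_{T^c S} v = 0, l_S ≤ v ≤ u_S} and θ(v) := f(x) + ⟨(∇f(x))_S, v − x_S⟩ + (1/2)⟨v − x_S, G_{SS}(v − x_S)⟩ + δ_{Π̂}(v) for v ∈ ℝ^m. Then for any v̂ ∈ ℝ^m, the vector y ∈ ℝⁿ defined by y_S = v̂ and y_{S^c} = 0 satisfies Θ(y) = θ(v̂) and dist(0, ∂Θ(y)) = dist(0, ∂θ(v̂)). -/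

import Mathlib

open scoped Classical

noncomputable section

/-- The box `Ω = {x : l ≤ x ≤ u}` in ℝⁿ. -/
def Om {n : ℕ} (l u : Fin n → ℝ) : Set (EuclideanSpace ℝ (Fin n)) :=
  {x | ∀ i, l i ≤ x i ∧ x i ≤ u i}

/-- Identity reinterpretation of a coordinate vector as a point of Euclidean space. -/
def toEuc {n : ℕ} (v : Fin n → ℝ) : EuclideanSpace ℝ (Fin n) := WithLp.toLp 2 v

/-- Identity reinterpretation, reduced (subtype-indexed) version. -/
def toEucS {n : ℕ} (S : Finset (Fin n)) (v : {i : Fin n // i ∈ S} → ℝ) :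
    EuclideanSpace ℝ {i : Fin n // i ∈ S} := WithLp.toLp 2 v

/-- `Π = {y ∈ Ω : B_{T^c·}y = 0, y_{S^c} = 0}`. -/
def PiRed {n p : ℕ} (B : Matrix (Fin p) (Fin n) ℝ) (l u : Fin n → ℝ)
    (S : Finset (Fin n)) (T : Finset (Fin p)) : Set (EuclideanSpace ℝ (Fin n)) :=
  {y | y ∈ Om l u ∧ (∀ j ∉ T, B.mulVec y j = 0) ∧ ∀ i ∉ S, y i = 0}

/-- `Π̂ = {v ∈ ℝ^{|S|} : B_{T^c S}v = 0, l_S ≤ v ≤ u_S}`. -/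
def PiHat {n p : ℕ} (B : Matrix (Fin p) (Fin n) ℝ) (l u : Fin n → ℝ)
    (S : Finset (Fin n)) (T : Finset (Fin p)) :
    Set (EuclideanSpace ℝ {i : Fin n // i ∈ S}) :=
  {v | (∀ j ∉ T, (∑ i : {i : Fin n // i ∈ S}, B j i.1 * v i) = 0) ∧
    ∀ i : {i : Fin n // i ∈ S}, l i.1 ≤ v i ∧ v i ≤ u i.1}

/-- The subvector `w_S`. -/
def subVec {n : ℕ} (S : Finset (Fin n)) (w : EuclideanSpace ℝ (Fin n)) :
    EuclideanSpace ℝ {i : Fin n // i ∈ S} := WithLp.toLp 2 (fun i => w i.1)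

/-- The principal submatrix `G_{SS}`. -/
def subMat {n : ℕ} (S : Finset (Fin n)) (G : Matrix (Fin n) (Fin n) ℝ) :
    Matrix {i : Fin n // i ∈ S} {i : Fin n // i ∈ S} ℝ :=
  G.submatrix (fun a => a.1) (fun b => b.1)

/-- `Θ(y) = f(x) + ⟨∇f(x), y−x⟩ + (1/2)⟨y−x, G(y−x)⟩ + δ_Π(y)`. -/
def ThetaRed {n p : ℕ} (B : Matrix (Fin p) (Fin n) ℝ) (l u : Fin n → ℝ)
    (f : EuclideanSpace ℝ (Fin n) → ℝ) (G : Matrix (Fin n) (Fin n) ℝ)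
    (x : EuclideanSpace ℝ (Fin n)) (S : Finset (Fin n)) (T : Finset (Fin p))
    (y : EuclideanSpace ℝ (Fin n)) : EReal :=
  if y ∈ PiRed B l u S T then
    ((f x + (inner ℝ (gradient f x) (y - x) : ℝ)
      + (1 : ℝ) / 2 * (inner ℝ (y - x) (toEuc (G.mulVec (y - x))) : ℝ) : ℝ) : EReal)
  else ⊤

/-- `θ(v) = f(x) + ⟨(∇f(x))_S, v−x_S⟩ + (1/2)⟨v−x_S, G_{SS}(v−x_S)⟩ + δ_{Π̂}(v)`. -/
def thetaHat {n p : ℕ} (B : Matrix (Fin p) (Fin n) ℝ) (l u : Fin n → ℝ)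
    (f : EuclideanSpace ℝ (Fin n) → ℝ) (G : Matrix (Fin n) (Fin n) ℝ)
    (x : EuclideanSpace ℝ (Fin n)) (S : Finset (Fin n)) (T : Finset (Fin p))
    (v : EuclideanSpace ℝ {i : Fin n // i ∈ S}) : EReal :=
  if v ∈ PiHat B l u S T then
    ((f x + (inner ℝ (subVec S (gradient f x)) (v - subVec S x) : ℝ)
      + (1 : ℝ) / 2 *
        (inner ℝ (v - subVec S x) (toEucS S ((subMat S G).mulVec (v - subVec S x))) : ℝ) : ℝ)
      : EReal)
  else ⊤

/-- `∂Θ(y) = ∇f(x) + G(y−x) + N_Π(y)` (empty when `y ∉ Π`). -/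
def subdiffTheta {n p : ℕ} (B : Matrix (Fin p) (Fin n) ℝ) (l u : Fin n → ℝ)
    (f : EuclideanSpace ℝ (Fin n) → ℝ) (G : Matrix (Fin n) (Fin n) ℝ)
    (x : EuclideanSpace ℝ (Fin n)) (S : Finset (Fin n)) (T : Finset (Fin p))
    (y : EuclideanSpace ℝ (Fin n)) : Set (EuclideanSpace ℝ (Fin n)) :=
  {w | y ∈ PiRed B l u S T ∧ ∃ ξ : EuclideanSpace ℝ (Fin n),
    (∀ z ∈ PiRed B l u S T, (inner ℝ ξ (z - y) : ℝ) ≤ 0) ∧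
    w = gradient f x + toEuc (G.mulVec (y - x)) + ξ}

/-- `∂θ(v) = (∇f(x))_S + G_{SS}(v−x_S) + N_{Π̂}(v)` (empty when `v ∉ Π̂`). -/
def subdiffHat {n p : ℕ} (B : Matrix (Fin p) (Fin n) ℝ) (l u : Fin n → ℝ)
    (f : EuclideanSpace ℝ (Fin n) → ℝ) (G : Matrix (Fin n) (Fin n) ℝ)
    (x : EuclideanSpace ℝ (Fin n)) (S : Finset (Fin n)) (T : Finset (Fin p))
    (v : EuclideanSpace ℝ {i : Fin n // i ∈ S}) :
    Set (EuclideanSpace ℝ {i : Fin n // i ∈ S}) :=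
  {w | v ∈ PiHat B l u S T ∧ ∃ ξ : EuclideanSpace ℝ {i : Fin n // i ∈ S},
    (∀ z ∈ PiHat B l u S T, (inner ℝ ξ (z - v) : ℝ) ≤ 0) ∧
    w = subVec S (gradient f x) + toEucS S ((subMat S G).mulVec (v - subVec S x)) + ξ}

/-! Extension by zero `J : ℝ^S → ℝⁿ` and restriction `P : ℝⁿ → ℝ^S` satisfy `P ∘ J = id`,
`‖J v‖ = ‖v‖`, `‖P w‖ ≤ ‖w‖`, and `⟪ξ, z⟫ = ⟪P ξ, P z⟫` whenever `z` vanishes off `S`. Since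
`l ≤ 0 ≤ u`, `J` maps `Π̂` into `Π` and `P` maps `Π` into `Π̂`. Since the points of `Π`, and `x`,
vanish off `S`, `P` identifies `Θ(J v̂)` with `θ(v̂)`, and `ξ` is normal to `Π` at `J v̂` iff `P ξ`
is normal to `Π̂` at `v̂`. Hence `P` maps `∂Θ(J v̂)` into `∂θ(v̂)` and `J` maps it back, neither
increasing norms, so both sets have the same distance to the origin. -/

lemma Metric.infDist_zero_le_of_forall_exists_norm_le {E F : Type*} [SeminormedAddCommGroup E]
    [SeminormedAddCommGroup F] {A : Set E} {B : Set F} (hA : A.Nonempty)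
    (h : ∀ a ∈ A, ∃ b ∈ B, ‖b‖ ≤ ‖a‖) : Metric.infDist 0 B ≤ Metric.infDist 0 A := by
  refine (Metric.le_infDist hA).2 fun a ha => ?_
  obtain ⟨b, hb, hba⟩ := h a ha
  calc Metric.infDist 0 B ≤ dist 0 b := Metric.infDist_le_dist_of_mem hb
    _ ≤ dist 0 a := by rwa [dist_zero_left, dist_zero_left]

lemma Metric.infDist_zero_eq_of_forall_exists_norm_le {E F : Type*} [SeminormedAddCommGroup E]
    [SeminormedAddCommGroup F] {A : Set E} {B : Set F}
    (hAB : ∀ a ∈ A, ∃ b ∈ B, ‖b‖ ≤ ‖a‖) (hBA : ∀ b ∈ B, ∃ a ∈ A, ‖a‖ ≤ ‖b‖) :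
    Metric.infDist 0 A = Metric.infDist 0 B := by
  rcases A.eq_empty_or_nonempty with rfl | hA
  · have hB : B = ∅ := Set.eq_empty_of_forall_notMem fun b hb => by
      obtain ⟨a, ha, -⟩ := hBA b hb
      exact ha
    rw [hB, Metric.infDist_empty, Metric.infDist_empty]
  · obtain ⟨a, ha⟩ := hA
    obtain ⟨b, hb, -⟩ := hAB a ha
    exact le_antisymm (Metric.infDist_zero_le_of_forall_exists_norm_le ⟨b, hb⟩ hBA)
      (Metric.infDist_zero_le_of_forall_exists_norm_le ⟨a, ha⟩ hAB)

def normalCone {E : Type*} [NormedAddCommGroup E] [InnerProductSpace ℝ E] (C : Set E) (y : E) :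
    Set E :=
  {ξ | ∀ z ∈ C, inner ℝ ξ (z - y) ≤ 0}

lemma inner_euclideanSpace {ι : Type*} [Fintype ι] (a b : EuclideanSpace ℝ ι) :
    inner ℝ a b = ∑ i, a i * b i := by
  simp [PiLp.inner_apply, mul_comm]

section ExtendByZero

variable {n : ℕ} {S : Finset (Fin n)}

def extendByZero (S : Finset (Fin n)) (v : EuclideanSpace ℝ {i : Fin n // i ∈ S}) :
    EuclideanSpace ℝ (Fin n) :=
  WithLp.toLp 2 fun i => if h : i ∈ S then v ⟨i, h⟩ else 0

@[simp]
lemma extendByZero_apply_coe (v : EuclideanSpace ℝ {i : Fin n // i ∈ S}) (i : {i // i ∈ S}) :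
    extendByZero S v i = v i :=
  dif_pos i.2

lemma extendByZero_apply_of_notMem (v : EuclideanSpace ℝ {i : Fin n // i ∈ S}) {i : Fin n}
    (hi : i ∉ S) : extendByZero S v i = 0 :=
  dif_neg hi

lemma subVec_add (a b : EuclideanSpace ℝ (Fin n)) : subVec S (a + b) = subVec S a + subVec S b :=
  rfl

lemma subVec_sub (a b : EuclideanSpace ℝ (Fin n)) : subVec S (a - b) = subVec S a - subVec S b :=
  rfl

@[simp]
lemma subVec_extendByZero (v : EuclideanSpace ℝ {i : Fin n // i ∈ S}) :
    subVec S (extendByZero S v) = v :=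
  PiLp.ext fun i => extendByZero_apply_coe v i

lemma sum_eq_sum_subtype_of_notMem {F : Fin n → ℝ} (hF : ∀ i ∉ S, F i = 0) :
    ∑ i, F i = ∑ i : {i // i ∈ S}, F i := by
  rw [Finset.sum_coe_sort S F]
  exact (Finset.sum_subset S.subset_univ fun i _ hi => hF i hi).symm

lemma inner_eq_inner_subVec {ξ z : EuclideanSpace ℝ (Fin n)} (hz : ∀ i ∉ S, z i = 0) :
    inner ℝ ξ z = inner ℝ (subVec S ξ) (subVec S z) := by
  rw [inner_euclideanSpace, inner_euclideanSpace,
    sum_eq_sum_subtype_of_notMem fun i hi => by rw [hz i hi, mul_zero]]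
  rfl

lemma norm_extendByZero (v : EuclideanSpace ℝ {i : Fin n // i ∈ S}) :
    ‖extendByZero S v‖ = ‖v‖ := by
  rw [EuclideanSpace.norm_eq, EuclideanSpace.norm_eq, sum_eq_sum_subtype_of_notMem fun i hi => by
    rw [extendByZero_apply_of_notMem v hi, norm_zero, sq, mul_zero]]
  simp

lemma norm_subVec_le (w : EuclideanSpace ℝ (Fin n)) : ‖subVec S w‖ ≤ ‖w‖ := by
  rw [EuclideanSpace.norm_eq, EuclideanSpace.norm_eq]
  refine Real.sqrt_le_sqrt ?_
  calc ∑ i : {i // i ∈ S}, ‖subVec S w i‖ ^ 2 = ∑ i ∈ S, ‖w i‖ ^ 2 :=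
        Finset.sum_coe_sort S fun i => ‖w i‖ ^ 2
    _ ≤ ∑ i, ‖w i‖ ^ 2 :=
        Finset.sum_le_sum_of_subset_of_nonneg S.subset_univ fun i _ _ => sq_nonneg _

lemma mulVec_apply_eq_sum_subVec {p : ℕ} (B : Matrix (Fin p) (Fin n) ℝ)
    {z : EuclideanSpace ℝ (Fin n)} (hz : ∀ i ∉ S, z i = 0) (j : Fin p) :
    B.mulVec z j = ∑ i : {i // i ∈ S}, B j i * subVec S z i :=
  sum_eq_sum_subtype_of_notMem fun i hi => by rw [hz i hi, mul_zero]

lemma subVec_mulVec (G : Matrix (Fin n) (Fin n) ℝ) {z : EuclideanSpace ℝ (Fin n)}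
    (hz : ∀ i ∉ S, z i = 0) :
    subVec S (toEuc (G.mulVec z)) = toEucS S ((subMat S G).mulVec (subVec S z)) :=
  PiLp.ext fun i => mulVec_apply_eq_sum_subVec G hz i

end ExtendByZero

section Reduction

variable {n p : ℕ} {B : Matrix (Fin p) (Fin n) ℝ} {l u : Fin n → ℝ} {S : Finset (Fin n)}
  {T : Finset (Fin p)}

lemma subVec_mem_piHat {z : EuclideanSpace ℝ (Fin n)} (hz : z ∈ PiRed B l u S T) :
    subVec S z ∈ PiHat B l u S T := by
  obtain ⟨hzΩ, hzB, hz0⟩ := hz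
  exact ⟨fun j hj => (mulVec_apply_eq_sum_subVec B hz0 j).symm.trans (hzB j hj), fun i => hzΩ i⟩

lemma extendByZero_mem_piRed (hl : ∀ i, l i ≤ 0) (hu : ∀ i, 0 ≤ u i)
    {v : EuclideanSpace ℝ {i : Fin n // i ∈ S}} (hv : v ∈ PiHat B l u S T) :
    extendByZero S v ∈ PiRed B l u S T := by
  obtain ⟨hvB, hvΩ⟩ := hv
  have hv0 : ∀ i ∉ S, extendByZero S v i = 0 := fun i hi => extendByZero_apply_of_notMem v hi
  refine ⟨fun i => ?_, fun j hj => ?_, hv0⟩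
  · by_cases hi : i ∈ S
    · rw [show extendByZero S v i = v ⟨i, hi⟩ from dif_pos hi]
      exact hvΩ ⟨i, hi⟩
    · rw [hv0 i hi]
      exact ⟨hl i, hu i⟩
  · rw [mulVec_apply_eq_sum_subVec B hv0 j, subVec_extendByZero]
    exact hvB j hj

lemma extendByZero_mem_piRed_iff (hl : ∀ i, l i ≤ 0) (hu : ∀ i, 0 ≤ u i)
    {v : EuclideanSpace ℝ {i : Fin n // i ∈ S}} :
    extendByZero S v ∈ PiRed B l u S T ↔ v ∈ PiHat B l u S T :=
  ⟨fun h => subVec_extendByZero v ▸ subVec_mem_piHat h, extendByZero_mem_piRed hl hu⟩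

lemma sub_extendByZero_eq_zero_of_mem_piRed {z : EuclideanSpace ℝ (Fin n)}
    (hz : z ∈ PiRed B l u S T) (v : EuclideanSpace ℝ {i : Fin n // i ∈ S}) :
    ∀ i ∉ S, (z - extendByZero S v) i = 0 := fun i hi => by
  simp [hz.2.2 i hi, extendByZero_apply_of_notMem v hi]

lemma mem_normalCone_piRed_iff (hl : ∀ i, l i ≤ 0) (hu : ∀ i, 0 ≤ u i)
    {v : EuclideanSpace ℝ {i : Fin n // i ∈ S}} {ξ : EuclideanSpace ℝ (Fin n)} :
    ξ ∈ normalCone (PiRed B l u S T) (extendByZero S v) ↔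
      subVec S ξ ∈ normalCone (PiHat B l u S T) v := by
  constructor
  · intro hξ z hz
    have := hξ _ (extendByZero_mem_piRed hl hu hz)
    rwa [inner_eq_inner_subVec (sub_extendByZero_eq_zero_of_mem_piRed
      (extendByZero_mem_piRed hl hu hz) v), subVec_sub, subVec_extendByZero,
      subVec_extendByZero] at this
  · intro hξ z hz
    rw [inner_eq_inner_subVec (sub_extendByZero_eq_zero_of_mem_piRed hz v), subVec_sub,
      subVec_extendByZero]
    exact hξ _ (subVec_mem_piHat hz)

end Reduction

section Theta

variable {n p : ℕ} {B : Matrix (Fin p) (Fin n) ℝ} {l u : Fin n → ℝ}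
  {f : EuclideanSpace ℝ (Fin n) → ℝ} {G : Matrix (Fin n) (Fin n) ℝ}
  {x : EuclideanSpace ℝ (Fin n)} {S : Finset (Fin n)} {T : Finset (Fin p)}

lemma extendByZero_sub_apply_of_notMem (hx0 : ∀ i ∉ S, x i = 0)
    (v : EuclideanSpace ℝ {i : Fin n // i ∈ S}) : ∀ i ∉ S, (extendByZero S v - x) i = 0 :=
  fun i hi => by simp [hx0 i hi, extendByZero_apply_of_notMem v hi]

lemma subVec_extendByZero_sub (v : EuclideanSpace ℝ {i : Fin n // i ∈ S}) :
    subVec S (extendByZero S v - x) = v - subVec S x := by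
  rw [subVec_sub, subVec_extendByZero]

lemma subVec_add_toEuc_mulVec (hx0 : ∀ i ∉ S, x i = 0) (g : EuclideanSpace ℝ (Fin n))
    (v : EuclideanSpace ℝ {i : Fin n // i ∈ S}) :
    subVec S (g + toEuc (G.mulVec (extendByZero S v - x))) =
      subVec S g + toEucS S ((subMat S G).mulVec (v - subVec S x)) := by
  rw [← WithLp.ofLp_sub (p := 2) (extendByZero S v) x, subVec_add,
    subVec_mulVec G (extendByZero_sub_apply_of_notMem hx0 v), subVec_extendByZero_sub,
    WithLp.ofLp_sub]

lemma thetaRed_extendByZero (hl : ∀ i, l i ≤ 0) (hu : ∀ i, 0 ≤ u i)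
    (hx0 : ∀ i ∉ S, x i = 0) (v : EuclideanSpace ℝ {i : Fin n // i ∈ S}) :
    ThetaRed B l u f G x S T (extendByZero S v) = thetaHat B l u f G x S T v := by
  have hd := extendByZero_sub_apply_of_notMem hx0 v
  have hlin : inner ℝ (gradient f x) (extendByZero S v - x) =
      inner ℝ (subVec S (gradient f x)) (v - subVec S x) := by
    rw [inner_eq_inner_subVec hd, subVec_extendByZero_sub]
  have hquad : inner ℝ (extendByZero S v - x) (toEuc (G.mulVec (extendByZero S v - x))) =
      inner ℝ (v - subVec S x) (toEucS S ((subMat S G).mulVec (v - subVec S x))) := by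
    rw [real_inner_comm, inner_eq_inner_subVec hd, ← WithLp.ofLp_sub (p := 2) (extendByZero S v) x,
      subVec_mulVec G hd, subVec_extendByZero_sub, real_inner_comm, WithLp.ofLp_sub]
  rw [ThetaRed, thetaHat, extendByZero_mem_piRed_iff hl hu, hlin, hquad]

lemma subVec_mem_subdiffHat (hl : ∀ i, l i ≤ 0) (hu : ∀ i, 0 ≤ u i)
    (hx0 : ∀ i ∉ S, x i = 0) {v : EuclideanSpace ℝ {i : Fin n // i ∈ S}}
    {w : EuclideanSpace ℝ (Fin n)} (hw : w ∈ subdiffTheta B l u f G x S T (extendByZero S v)) :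
    subVec S w ∈ subdiffHat B l u f G x S T v := by
  obtain ⟨hv, ξ, hξ, rfl⟩ := hw
  refine ⟨(extendByZero_mem_piRed_iff hl hu).1 hv, subVec S ξ,
    (mem_normalCone_piRed_iff hl hu).1 hξ, ?_⟩
  rw [subVec_add, subVec_add_toEuc_mulVec hx0]

lemma extendByZero_mem_subdiffTheta (hl : ∀ i, l i ≤ 0) (hu : ∀ i, 0 ≤ u i)
    (hx0 : ∀ i ∉ S, x i = 0) {v w : EuclideanSpace ℝ {i : Fin n // i ∈ S}}
    (hw : w ∈ subdiffHat B l u f G x S T v) :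
    extendByZero S w ∈ subdiffTheta B l u f G x S T (extendByZero S v) := by
  obtain ⟨hv, η, hη, hw⟩ := hw
  set a := gradient f x + toEuc (G.mulVec (extendByZero S v - x)) with ha
  refine ⟨extendByZero_mem_piRed hl hu hv, extendByZero S w - a,
    (mem_normalCone_piRed_iff hl hu).2 ?_, (add_sub_cancel a _).symm⟩
  rw [subVec_sub, subVec_extendByZero, ha, subVec_add_toEuc_mulVec hx0, hw, add_sub_cancel_left]
  exact hη

lemma infDist_subdiffTheta_extendByZero (hl : ∀ i, l i ≤ 0) (hu : ∀ i, 0 ≤ u i)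
    (hx0 : ∀ i ∉ S, x i = 0) (v : EuclideanSpace ℝ {i : Fin n // i ∈ S}) :
    Metric.infDist 0 (subdiffTheta B l u f G x S T (extendByZero S v)) =
      Metric.infDist 0 (subdiffHat B l u f G x S T v) :=
  Metric.infDist_zero_eq_of_forall_exists_norm_le
    (fun w hw => ⟨subVec S w, subVec_mem_subdiffHat hl hu hx0 hw, norm_subVec_le w⟩)
    (fun w hw => ⟨extendByZero S w, extendByZero_mem_subdiffTheta hl hu hx0 hw,
      (norm_extendByZero w).le⟩)

end Theta

theorem stmt19_general {n p : ℕ} (B : Matrix (Fin p) (Fin n) ℝ)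
    (l u : Fin n → ℝ) (hl : ∀ i, l i ≤ 0) (hu : ∀ i, 0 ≤ u i)
    (f : EuclideanSpace ℝ (Fin n) → ℝ)
    (x : EuclideanSpace ℝ (Fin n))
    (S : Finset (Fin n)) (hS : ∀ i, i ∈ S ↔ x i ≠ 0)
    (T : Finset (Fin p))
    (G : Matrix (Fin n) (Fin n) ℝ)
    (vhat : EuclideanSpace ℝ {i : Fin n // i ∈ S})
    (y : EuclideanSpace ℝ (Fin n))
    (hy : ∀ i : Fin n, y i = if h : i ∈ S then vhat ⟨i, h⟩ else 0) :
    ThetaRed B l u f G x S T y = thetaHat B l u f G x S T vhat ∧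
    Metric.infDist (0 : EuclideanSpace ℝ (Fin n)) (subdiffTheta B l u f G x S T y) =
      Metric.infDist (0 : EuclideanSpace ℝ {i : Fin n // i ∈ S})
        (subdiffHat B l u f G x S T vhat) := by
  have hx0 : ∀ i ∉ S, x i = 0 := fun i hi => not_not.1 (mt (hS i).2 hi)
  obtain rfl : y = extendByZero S vhat := PiLp.ext hy
  exact ⟨thetaRed_extendByZero hl hu hx0 vhat, infDist_subdiffTheta_extendByZero hl hu hx0 vhat⟩

/-- dimension reduction. If `y ∈ ℝⁿ` is obtained from `v̂ ∈ ℝ^{|S|}` by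
`y_S = v̂`, `y_{S^c} = 0`, then `Θ(y) = θ(v̂)` and `dist(0, ∂Θ(y)) = dist(0, ∂θ(v̂))`. -/
theorem stmt19 {n p : ℕ} (B : Matrix (Fin p) (Fin n) ℝ)
    (l u : Fin n → ℝ) (hl : ∀ i, l i ≤ 0) (hu : ∀ i, 0 ≤ u i)
    (f : EuclideanSpace ℝ (Fin n) → ℝ) (hf : Differentiable ℝ f)
    (x : EuclideanSpace ℝ (Fin n)) (hx : x ∈ Om l u)
    (S : Finset (Fin n)) (hS : ∀ i, i ∈ S ↔ x i ≠ 0)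
    (hSne : S.Nonempty) (hSneq : S ≠ Finset.univ)
    (T : Finset (Fin p)) (hT : ∀ j, j ∈ T ↔ B.mulVec x j ≠ 0)
    (G : Matrix (Fin n) (Fin n) ℝ) (hGsym : G.IsSymm)
    (vhat : EuclideanSpace ℝ {i : Fin n // i ∈ S})
    (y : EuclideanSpace ℝ (Fin n))
    (hy : ∀ i : Fin n, y i = if h : i ∈ S then vhat ⟨i, h⟩ else 0) :
    ThetaRed B l u f G x S T y = thetaHat B l u f G x S T vhat ∧
    Metric.infDist (0 : EuclideanSpace ℝ (Fin n)) (subdiffTheta B l u f G x S T y) =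
      Metric.infDist (0 : EuclideanSpace ℝ {i : Fin n // i ∈ S})
        (subdiffHat B l u f G x S T vhat) :=
  stmt19_general B l u hl hu f x S hS T G vhat y hy

end
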